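/- Let X and Y be random variables whose moment generating functions μ_X(s) = E[exp(sX)] and μ_Y(s) = E[exp(sY)] are finite on an open interval (-s0, s0) with s0 > 0. If E[X^k] = E[Y^k] for all k ∈ ℕ, then X and Y have the same distribution. -/

import Mathlib

open MeasureTheory Set

section helpers

variable {γ : Measure ℝ} {s0 : ℝ}

lemma int_exp_abs [IsProbabilityMeasure γ]
    (hγ : ∀ s ∈ Set.Ioo (-s0) s0, Integrable (fun x => Real.exp (s * x)) γ)
    {s : ℝ} (hs : 0 < s) (hs' : s < s0) :
    Integrable (fun x => Real.exp (s * |x|)) γ := by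
  have h1 := hγ s ⟨by linarith, hs'⟩
  have h2 := hγ (-s) ⟨by linarith, by linarith⟩
  refine (h1.add h2).mono' (Continuous.aestronglyMeasurable (by continuity)) ?_
  filter_upwards with x
  rw [Real.norm_eq_abs, _root_.abs_of_nonneg (Real.exp_nonneg _)]
  simp only [Pi.add_apply]
  rcases abs_cases x with ⟨h, _⟩ | ⟨h, _⟩ <;> rw [h] <;>
    [skip; rw [show s * -x = -s * x by ring]] <;>
    nlinarith [Real.exp_nonneg (s * x), Real.exp_nonneg (-s * x)]

lemma pow_le_exp_of_nonneg' {y : ℝ} (hy : 0 ≤ y) (m : ℕ) :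
    y ^ m ≤ m.factorial * Real.exp y := by
  have h := Real.sum_le_exp_of_nonneg hy (m + 1)
  have h2 : y ^ m / m.factorial ≤ Real.exp y := by
    refine le_trans ?_ h
    exact Finset.single_le_sum (f := fun i => y ^ i / i.factorial)
      (fun i _ => by positivity) (Finset.self_mem_range_succ m)
  have hm : (0:ℝ) < m.factorial := by exact_mod_cast m.factorial_pos
  rw [div_le_iff₀ hm] at h2
  linarith

lemma int_pow_exp [IsProbabilityMeasure γ] (hs0 : 0 < s0)
    (hγ : ∀ s ∈ Set.Ioo (-s0) s0, Integrable (fun x => Real.exp (s * x)) γ) (m : ℕ) :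
    Integrable (fun x => |x| ^ m * Real.exp (s0/2 * |x|)) γ := by
  have hint : Integrable (fun x => Real.exp (3*s0/4 * |x|)) γ :=
    int_exp_abs hγ (by linarith) (by linarith)
  refine (hint.const_mul ((m.factorial : ℝ) * (4/s0)^m)).mono'
    (Continuous.aestronglyMeasurable (by continuity)) ?_
  filter_upwards with x
  rw [Real.norm_eq_abs, _root_.abs_of_nonneg (by positivity)]
  have h1 : |x| ^ m ≤ (m.factorial : ℝ) * (4/s0)^m * Real.exp (s0/4 * |x|) := by
    have h := pow_le_exp_of_nonneg' (y := s0/4 * |x|) (by positivity) m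
    have h2 : (s0/4 * |x|)^m = (s0/4)^m * |x|^m := by ring
    rw [h2] at h
    calc |x|^m = ((s0/4)^m * |x|^m) * (4/s0)^m := by
          rw [mul_comm ((s0/4)^m), mul_assoc, ← mul_pow, show s0/4 * (4/s0) = 1 by field_simp,
            one_pow, mul_one]
      _ ≤ (m.factorial * Real.exp (s0/4 * |x|)) * (4/s0)^m :=
          mul_le_mul_of_nonneg_right h (by positivity)
      _ = (m.factorial : ℝ) * (4/s0)^m * Real.exp (s0/4 * |x|) := by ring
  calc |x| ^ m * Real.exp (s0/2 * |x|)
      ≤ ((m.factorial : ℝ) * (4/s0)^m * Real.exp (s0/4 * |x|)) * Real.exp (s0/2 * |x|) :=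
        mul_le_mul_of_nonneg_right h1 (Real.exp_nonneg _)
    _ = (m.factorial : ℝ) * (4/s0)^m * Real.exp (3*s0/4 * |x|) := by
        rw [mul_assoc, ← Real.exp_add]; ring_nf

lemma int_pow' [IsProbabilityMeasure γ] (hs0 : 0 < s0)
    (hγ : ∀ s ∈ Set.Ioo (-s0) s0, Integrable (fun x => Real.exp (s * x)) γ) (m : ℕ) :
    Integrable (fun x => |x| ^ m) γ := by
  refine (int_pow_exp hs0 hγ m).mono'
    (Continuous.aestronglyMeasurable (by continuity)) ?_
  filter_upwards with x
  rw [Real.norm_eq_abs, _root_.abs_of_nonneg (by positivity)]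
  nlinarith [Real.one_le_exp (show 0 ≤ s0/2 * |x| by positivity), abs_nonneg x,
    pow_nonneg (abs_nonneg x) m]

end helpers

section part2
variable {s0 : ℝ}

noncomputable def Qint (γ : Measure ℝ) (m : ℕ) (t : ℝ) : ℂ :=
  ∫ x, (x:ℂ)^m * Complex.exp ((t * x : ℝ) * Complex.I) ∂γ

lemma norm_integrand (m : ℕ) (t : ℝ) (x : ℝ) :
    ‖(x:ℂ)^m * Complex.exp ((t * x : ℝ) * Complex.I)‖ = |x|^m := by
  simp [Complex.norm_exp]

lemma int_integrand {γ : Measure ℝ} [IsProbabilityMeasure γ] (hs0 : 0 < s0)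
    (hγ : ∀ s ∈ Set.Ioo (-s0) s0, Integrable (fun x => Real.exp (s * x)) γ)
    (m : ℕ) (t : ℝ) :
    Integrable (fun x : ℝ => (x:ℂ)^m * Complex.exp ((t * x : ℝ) * Complex.I)) γ := by
  refine (int_pow' hs0 hγ m).mono' (Continuous.aestronglyMeasurable (by fun_prop)) ?_
  filter_upwards with x
  rw [norm_integrand]

lemma Qint_hasSum {γ : Measure ℝ} [IsProbabilityMeasure γ] (hs0 : 0 < s0)
    (hγ : ∀ s ∈ Set.Ioo (-s0) s0, Integrable (fun x => Real.exp (s * x)) γ)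
    (m : ℕ) (t h : ℝ) (hh : |h| ≤ s0 / 4) :
    HasSum (fun k : ℕ => ((h:ℂ) * Complex.I)^k / k.factorial * Qint γ (m + k) t)
      (Qint γ m (t + h)) := by
  set F : ℕ → ℝ → ℂ := fun k x =>
    ((h:ℂ) * Complex.I)^k / k.factorial * ((x:ℂ)^(m+k) * Complex.exp ((t * x : ℝ) * Complex.I))
    with hF
  have hFint : ∀ k, Integrable (F k) γ := fun k => (int_integrand hs0 hγ (m+k) t).const_mul _
  have hnorm : ∀ k x, ‖F k x‖ = |h|^k / k.factorial * |x|^(m+k) := by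
    intro k x
    rw [hF]
    simp [Complex.norm_exp, map_mul, map_div₀, map_pow,
      Complex.norm_natCast]
  have key : HasSum (fun k => ∫ x, F k x ∂γ) (∫ x, ∑' k, F k x ∂γ) := by
    apply MeasureTheory.hasSum_integral_of_summable_integral_norm hFint
    -- summability of k ↦ ∫ ‖F k x‖
    have heq : ∀ k, (∫ x, ‖F k x‖ ∂γ) = |h|^k / k.factorial * ∫ x, |x|^(m+k) ∂γ := by
      intro k
      rw [← integral_const_mul]
      exact integral_congr_ae (Filter.Eventually.of_forall fun x => hnorm k x)
    simp_rw [heq]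
    apply summable_of_sum_range_le (c := ∫ x, |x|^m * Real.exp (s0/2 * |x|) ∂γ)
      (fun k => mul_nonneg (by positivity) (integral_nonneg fun x => by positivity))
    intro n
    have : ∀ k, |h|^k / k.factorial * ∫ x, |x|^(m+k) ∂γ
        = ∫ x, |x|^(m+k) * (|h|^k / k.factorial) ∂γ := by
      intro k; rw [mul_comm, ← integral_mul_const]
    simp_rw [this]
    rw [← integral_finset_sum _ (fun k _ => (int_pow' hs0 hγ (m+k)).mul_const _)]
    apply integral_mono
      (integrable_finset_sum _ (fun k _ => (int_pow' hs0 hγ (m+k)).mul_const _))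
      (int_pow_exp hs0 hγ m)
    intro x
    have hexp : ∑ k ∈ Finset.range n, (s0/4 * |x|)^k / k.factorial
        ≤ Real.exp (s0/4 * |x|) := Real.sum_le_exp_of_nonneg (by positivity) n
    calc ∑ k ∈ Finset.range n, |x|^(m+k) * (|h|^k / k.factorial)
        ≤ ∑ k ∈ Finset.range n, |x|^m * ((s0/4 * |x|)^k / k.factorial) := by
          apply Finset.sum_le_sum
          intro k _
          have hk : |h|^k ≤ (s0/4)^k := pow_le_pow_left₀ (abs_nonneg h) hh k
          calc |x|^(m+k) * (|h|^k / k.factorial)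
              = |x|^(m+k) / k.factorial * |h|^k := by ring
            _ ≤ |x|^(m+k) / k.factorial * (s0/4)^k :=
                mul_le_mul_of_nonneg_left hk (by positivity)
            _ = |x|^m * ((s0/4 * |x|)^k / k.factorial) := by
                rw [mul_pow, pow_add]; ring
      _ = |x|^m * ∑ k ∈ Finset.range n, (s0/4 * |x|)^k / k.factorial := by
          rw [Finset.mul_sum]
      _ ≤ |x|^m * Real.exp (s0/4 * |x|) :=
          mul_le_mul_of_nonneg_left hexp (by positivity)
      _ ≤ |x|^m * Real.exp (s0/2 * |x|) := by
          apply mul_le_mul_of_nonneg_left ?_ (by positivity)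
          exact Real.exp_le_exp.2 (by nlinarith [abs_nonneg x])
  have hptsum : ∀ x : ℝ, ∑' k, F k x
      = (x:ℂ)^m * Complex.exp (((t + h) * x : ℝ) * Complex.I) := by
    intro x
    have hexp : HasSum (fun k : ℕ => ((((h * x : ℝ)) : ℂ) * Complex.I)^k / k.factorial)
        (Complex.exp (((h * x : ℝ) : ℂ) * Complex.I)) := by
      have := NormedSpace.expSeries_div_hasSum_exp ((((h * x : ℝ)) : ℂ) * Complex.I)
      rw [← Complex.exp_eq_exp_ℂ] at this
      simpa using this
    have h2 := hexp.mul_left ((x:ℂ)^m * Complex.exp ((t * x : ℝ) * Complex.I))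
    have hfun : (fun k : ℕ => (x:ℂ)^m * Complex.exp ((t * x : ℝ) * Complex.I) *
        (((((h * x : ℝ)) : ℂ) * Complex.I)^k / k.factorial)) = fun k => F k x := by
      funext k
      rw [hF]
      push_cast
      ring
    rw [hfun] at h2
    rw [h2.tsum_eq, mul_assoc, ← Complex.exp_add]
    congr 2
    push_cast
    ring
  have hQ : (∫ x, ∑' k, F k x ∂γ) = Qint γ m (t + h) := by
    rw [Qint]
    exact integral_congr_ae (Filter.Eventually.of_forall fun x => hptsum x)
  have hterm : (fun k => ∫ x, F k x ∂γ)
      = fun k => ((h:ℂ) * Complex.I)^k / k.factorial * Qint γ (m + k) t := by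
    funext k
    rw [hF, Qint]
    exact integral_const_mul _ _
  rw [← hQ, ← hterm]
  exact key
end part2

section part3
variable {s0 : ℝ}

lemma Qint_eq (μ ν : Measure ℝ) [IsProbabilityMeasure μ] [IsProbabilityMeasure ν]
    (hs0 : 0 < s0)
    (hμ : ∀ s ∈ Set.Ioo (-s0) s0, Integrable (fun x => Real.exp (s * x)) μ)
    (hν : ∀ s ∈ Set.Ioo (-s0) s0, Integrable (fun x => Real.exp (s * x)) ν)
    (hmom : ∀ k : ℕ, (∫ x, x ^ k ∂μ) = ∫ x, x ^ k ∂ν) :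
    ∀ (m : ℕ) (t : ℝ), Qint μ m t = Qint ν m t := by
  have key : ∀ n : ℕ, ∀ (m : ℕ) (t : ℝ), |t| ≤ n * (s0/4) → Qint μ m t = Qint ν m t := by
    intro n
    induction n with
    | zero =>
      intro m t ht
      have ht0 : t = 0 := by
        rw [← abs_nonpos_iff]
        simpa using ht
      subst ht0
      have hR : ∀ γ : Measure ℝ, Qint γ m 0 = ((∫ x, x ^ m ∂γ : ℝ) : ℂ) := by
        intro γ
        calc Qint γ m 0 = ∫ x, ((x^m : ℝ) : ℂ) ∂γ := by
              apply integral_congr_ae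
              filter_upwards with x
              push_cast
              simp
          _ = ((∫ x, x ^ m ∂γ : ℝ) : ℂ) := integral_ofReal
      rw [hR μ, hR ν, hmom m]
    | succ n ih =>
      intro m t ht
      set t₀ : ℝ := t * n / (n + 1) with ht₀
      set h : ℝ := t / (n + 1) with hh
      have hn1 : (0:ℝ) < n + 1 := by positivity
      have hsum : t = t₀ + h := by rw [ht₀, hh, ← add_div, eq_div_iff hn1.ne']; ring
      have hht : |h| ≤ s0 / 4 := by
        rw [hh, abs_div, abs_of_pos hn1, div_le_iff₀ hn1]
        calc |t| ≤ (n+1) * (s0/4) := by push_cast at ht ⊢; linarith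
          _ = s0/4 * (n+1) := by ring
      have ht₀' : |t₀| ≤ n * (s0/4) := by
        rw [ht₀, show t * n / (n+1) = t / (n+1) * n by ring, abs_mul, abs_div,
          abs_of_pos hn1, Nat.abs_cast]
        have h1 : |t| / (n+1) ≤ s0/4 := by
          rw [div_le_iff₀ hn1]
          calc |t| ≤ (n+1) * (s0/4) := by push_cast at ht ⊢; linarith
            _ = s0/4 * (n+1) := by ring
        calc |t| / (n+1) * n ≤ s0/4 * n := by
              apply mul_le_mul_of_nonneg_right h1 (by positivity)
          _ = n * (s0/4) := by ring
      have h1 := Qint_hasSum hs0 hμ m t₀ h hht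
      have h2 := Qint_hasSum hs0 hν m t₀ h hht
      rw [hsum]
      rw [← h1.tsum_eq, ← h2.tsum_eq]
      exact tsum_congr fun k => by rw [ih (m + k) t₀ ht₀']
  intro m t
  obtain ⟨n, hn⟩ := exists_nat_ge (|t| / (s0/4))
  exact key n m t (by rw [div_le_iff₀ (by positivity)] at hn; linarith)

end part3

section part4

open scoped ContDiff
open Real Filter Topology

/-- Build a Schwartz map from a smooth compactly supported function. -/
noncomputable def mkCS (g : ℝ → ℂ) (hg : ContDiff ℝ ∞ g) (hsupp : HasCompactSupport g) :
    SchwartzMap ℝ ℂ where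
  toFun := g
  smooth' := hg
  decay' := by
    intro k n
    obtain ⟨C, hC⟩ := Continuous.bounded_above_of_compact_support
      (f := fun x : ℝ => ‖x‖ ^ k * ‖iteratedFDeriv ℝ n g x‖)
      (((continuous_norm).pow k).mul
        ((hg.continuous_iteratedFDeriv (mod_cast le_top)).norm))
      (((hsupp.iteratedFDeriv n).norm).mul_left)
    exact ⟨C, fun x => (le_abs_self _).trans ((Real.norm_eq_abs _ ▸ hC x))⟩

lemma schwartz_integral_eq {s0 : ℝ} (μ ν : Measure ℝ)
    [IsProbabilityMeasure μ] [IsProbabilityMeasure ν] (hs0 : 0 < s0)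
    (hμ : ∀ s ∈ Set.Ioo (-s0) s0, Integrable (fun x => Real.exp (s * x)) μ)
    (hν : ∀ s ∈ Set.Ioo (-s0) s0, Integrable (fun x => Real.exp (s * x)) ν)
    (hmom : ∀ k : ℕ, (∫ x, x ^ k ∂μ) = ∫ x, x ^ k ∂ν)
    (f : SchwartzMap ℝ ℂ) :
    ∫ x, f x ∂μ = ∫ x, f x ∂ν := by
  have hQ := Qint_eq μ ν hs0 hμ hν hmom
  set Ff : SchwartzMap ℝ ℂ := SchwartzMap.fourierTransformCLM ℂ f with hFfdef
  have hFf : ⇑Ff = FourierTransform.fourier ⇑f := rfl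
  -- inversion
  have hinv : ∀ x : ℝ, f x
      = ∫ w, Complex.exp ((2 * π * (w * x) : ℝ) * Complex.I) * Ff w := by
    intro x
    have h1 : FourierTransformInv.fourierInv (FourierTransform.fourier ⇑f) x = f x :=
      (f.integrable (μ := volume)).fourierInv_fourier_eq
        (by rw [← hFf]; exact Ff.integrable) (f.continuous.continuousAt)
    rw [Real.fourierInv_eq'] at h1
    rw [← h1]
    apply integral_congr_ae
    filter_upwards with w
    rw [hFf, smul_eq_mul]
    norm_num [mul_comm (x:ℂ) (w:ℂ)]
  -- the heavy Fubini step, stated for any of our two measures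
  have main : ∀ γ : Measure ℝ, IsProbabilityMeasure γ →
      (∫ x, f x ∂γ) = ∫ w, (Qint γ 0 (2 * π * w)) * Ff w := by
    intro γ hγp
    have hswap : (∫ x, ∫ w, Complex.exp ((2 * π * (w * x) : ℝ) * Complex.I) * Ff w ∂volume ∂γ)
        = ∫ w, ∫ x, Complex.exp ((2 * π * (w * x) : ℝ) * Complex.I) * Ff w ∂γ ∂volume := by
      apply MeasureTheory.integral_integral_swap
      have hcont : Continuous (Function.uncurry fun (x w : ℝ) =>
          Complex.exp ((2 * π * (w * x) : ℝ) * Complex.I) * Ff w) := by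
        apply Continuous.mul ?_ (Ff.continuous.comp continuous_snd)
        apply Complex.continuous_exp.comp
        apply Continuous.mul ?_ continuous_const
        exact Complex.continuous_ofReal.comp (by fun_prop)
      rw [MeasureTheory.integrable_prod_iff hcont.aestronglyMeasurable]
      constructor
      · filter_upwards with x
        apply MeasureTheory.Integrable.bdd_mul (c := 1) Ff.integrable
        · exact (Complex.continuous_exp.comp ((Complex.continuous_ofReal.comp
            (by fun_prop)).mul continuous_const)).aestronglyMeasurable
        · exact Filter.Eventually.of_forall fun w => (Complex.norm_exp_ofReal_mul_I _).le
      · apply MeasureTheory.Integrable.congr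
          (integrable_const (∫ w, ‖Ff w‖ ∂(volume : Measure ℝ)) (μ := γ))
        filter_upwards with x
        apply integral_congr_ae
        filter_upwards with w
        simp [Function.uncurry_apply_pair, norm_mul,
          Complex.norm_exp]
    calc (∫ x, f x ∂γ)
        = ∫ x, ∫ w, Complex.exp ((2 * π * (w * x) : ℝ) * Complex.I) * Ff w ∂volume ∂γ :=
          integral_congr_ae (Filter.Eventually.of_forall fun x => hinv x)
      _ = ∫ w, ∫ x, Complex.exp ((2 * π * (w * x) : ℝ) * Complex.I) * Ff w ∂γ ∂volume := hswap
      _ = ∫ w, (Qint γ 0 (2 * π * w)) * Ff w ∂volume := by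
          apply integral_congr_ae
          filter_upwards with w
          rw [MeasureTheory.integral_mul_const]
          congr 1
          rw [Qint]
          apply integral_congr_ae
          filter_upwards with x
          rw [pow_zero, one_mul]
          congr 2
          push_cast
          ring
  rw [main μ inferInstance, main ν inferInstance]
  apply integral_congr_ae
  filter_upwards with w
  rw [hQ 0 (2 * π * w)]

end part4

section part5

open scoped ContDiff
open Real Filter Topology

noncomputable def grm (a : ℝ) (n : ℕ) (x : ℝ) : ℝ :=
  Real.smoothTransition ((a + 1/(n+1) - x) * (n+1)) * Real.smoothTransition (x + n + 1)

lemma grm_contDiff (a : ℝ) (n : ℕ) : ContDiff ℝ ∞ (fun x : ℝ => ((grm a n x : ℝ) : ℂ)) := by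
  apply Complex.ofRealCLM.contDiff.comp
  apply ContDiff.mul
  · exact Real.smoothTransition.contDiff.comp
      (((contDiff_const.sub contDiff_id).mul contDiff_const))
  · exact Real.smoothTransition.contDiff.comp
      ((contDiff_id.add contDiff_const).add contDiff_const)

lemma grm_supp (a : ℝ) (n : ℕ) : HasCompactSupport (fun x : ℝ => ((grm a n x : ℝ) : ℂ)) := by
  have h : HasCompactSupport (grm a n) := by
    apply HasCompactSupport.intro (isCompact_Icc (a := -(n:ℝ)-2) (b := a+1))
    intro x hx
    simp only [Set.mem_Icc, not_and_or, not_le] at hx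
    rcases hx with hx | hx
    · have : x + n + 1 ≤ 0 := by linarith
      rw [grm, Real.smoothTransition.zero_of_nonpos this, mul_zero]
    · have : (a + 1/(n+1) - x) * (n+1) ≤ 0 := by
        apply mul_nonpos_of_nonpos_of_nonneg
        · have h1 : 1/((n:ℝ)+1) ≤ 1 := by
            rw [div_le_one (by positivity)]
            simp
          linarith
        · positivity
      rw [grm, Real.smoothTransition.zero_of_nonpos this, zero_mul]
  exact h.comp_left (g := fun r : ℝ => (r : ℂ)) Complex.ofReal_zero

lemma grm_tendsto (a x : ℝ) :
    Tendsto (fun n : ℕ => ((grm a n x : ℝ) : ℂ)) atTop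
      (nhds (Set.indicator (Set.Iic a) (fun _ => (1:ℂ)) x)) := by
  rcases le_or_gt x a with hxa | hxa
  · rw [Set.indicator_of_mem (show x ∈ Set.Iic a from hxa)]
    apply Tendsto.congr' ?_ tendsto_const_nhds
    rw [Filter.EventuallyEq, eventually_atTop]
    refine ⟨⌈-x⌉₊, fun n hn => ?_⟩
    have h2 : (1:ℝ) ≤ x + n + 1 := by
      have := Nat.le_ceil (-x)
      have h3 : (⌈-x⌉₊ : ℝ) ≤ n := by exact_mod_cast hn
      linarith
    have h1 : (1:ℝ) ≤ (a + 1/(n+1) - x) * (n+1) := by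
      have hn1 : (0:ℝ) < n + 1 := by positivity
      have : (a + 1/(n+1) - x) * (n+1) = (a - x) * (n+1) + 1 := by
        field_simp
        ring
      rw [this]
      nlinarith
    rw [grm, Real.smoothTransition.one_of_one_le h1, Real.smoothTransition.one_of_one_le h2,
      mul_one]
    norm_num
  · rw [Set.indicator_of_notMem (by simpa using hxa)]
    apply Tendsto.congr' ?_ tendsto_const_nhds
    rw [Filter.EventuallyEq, eventually_atTop]
    refine ⟨⌈1/(x-a)⌉₊, fun n hn => ?_⟩
    have hxa' : (0:ℝ) < x - a := by linarith
    have h3 : (⌈1/(x-a)⌉₊ : ℝ) ≤ n := by exact_mod_cast hn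
    have h4 : 1/(x-a) ≤ (n:ℝ) := (Nat.le_ceil _).trans h3
    have h1 : (a + 1/(n+1) - x) * (n+1) ≤ 0 := by
      have hn1 : (0:ℝ) < n + 1 := by positivity
      have heq : (a + 1/(n+1) - x) * (n+1) = 1 - (x - a) * (n+1) := by
        field_simp
        ring
      rw [heq, sub_nonpos]
      rw [div_le_iff₀ hxa'] at h4
      nlinarith
    rw [grm, Real.smoothTransition.zero_of_nonpos h1, zero_mul]
    norm_num

end part5

theorem eq_of_moments_eq_of_mgf_finite
    (μ ν : Measure ℝ) [IsProbabilityMeasure μ] [IsProbabilityMeasure ν]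
    (s0 : ℝ) (hs0 : 0 < s0)
    (hμ : ∀ s ∈ Set.Ioo (-s0) s0, Integrable (fun x => Real.exp (s * x)) μ)
    (hν : ∀ s ∈ Set.Ioo (-s0) s0, Integrable (fun x => Real.exp (s * x)) ν)
    (hmom : ∀ k : ℕ, (∫ x, x ^ k ∂μ) = ∫ x, x ^ k ∂ν) :
    μ = ν := by
  apply MeasureTheory.Measure.ext_of_Iic
  intro a
  set G : ℕ → SchwartzMap ℝ ℂ := fun n =>
    mkCS (fun x : ℝ => ((grm a n x : ℝ) : ℂ)) (grm_contDiff a n) (grm_supp a n) with hG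
  have hGn : ∀ n x, G n x = ((grm a n x : ℝ) : ℂ) := fun n x => rfl
  have hb : ∀ (n : ℕ) (x : ℝ), ‖G n x‖ ≤ (1:ℝ) := by
    intro n x
    rw [hGn, Complex.norm_real, Real.norm_eq_abs, grm]
    rw [abs_of_nonneg (mul_nonneg (Real.smoothTransition.nonneg _) (Real.smoothTransition.nonneg _))]
    exact mul_le_one₀ (Real.smoothTransition.le_one _) (Real.smoothTransition.nonneg _)
      (Real.smoothTransition.le_one _)
  have hlim : ∀ (γ : Measure ℝ), IsProbabilityMeasure γ →
      Filter.Tendsto (fun n => ∫ x, G n x ∂γ) Filter.atTop (nhds ((γ (Set.Iic a)).toReal • (1:ℂ))) := by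
    intro γ hγp
    have := MeasureTheory.tendsto_integral_of_dominated_convergence
      (F := fun n x => G n x) (f := Set.indicator (Set.Iic a) (fun _ => (1:ℂ)))
      (μ := γ) (fun _ : ℝ => (1:ℝ))
      (fun n => (G n).continuous.aestronglyMeasurable)
      (MeasureTheory.integrable_const 1)
      (fun n => Filter.Eventually.of_forall (hb n))
      (Filter.Eventually.of_forall (fun x => Filter.Tendsto.congr (fun n => (hGn n x).symm) (grm_tendsto a x)))
    rwa [MeasureTheory.integral_indicator_const (1:ℂ) measurableSet_Iic] at this
  have heq : ∀ n, ∫ x, G n x ∂μ = ∫ x, G n x ∂ν :=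
    fun n => schwartz_integral_eq μ ν hs0 hμ hν hmom (G n)
  have hfin := tendsto_nhds_unique (hlim μ inferInstance)
    ((hlim ν inferInstance).congr fun n => (heq n).symm)
  have h2 : ((μ (Set.Iic a)).toReal : ℂ) = ((ν (Set.Iic a)).toReal : ℂ) := by
    simpa [smul_eq_mul] using hfin
  rw [← ENNReal.toReal_eq_toReal_iff' (measure_ne_top μ _) (measure_ne_top ν _)]
  exact_mod_cast h2
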